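/- (Exterior mass sandwich, Lemma 2.6.) Let α ∈ [0,1), R > 0, and let λ₂ > λ₁ > 0 be such that U_{λ₁,α} and U_{λ₂,α} take the same value at points of norm R. Let g : [R,∞) → ℝ satisfy the exterior radial Bol hypothesis with parameter α, with exterior mass function m(r) = 2π∫_r^∞ s^{1−2α} e^{g(s)} ds, suppose m(R) < 8π(1−α), and suppose g(R) equals the common value of U_{λ₁,α} and U_{λ₂,α} at points of norm R. Then ∫_{ℝ²∖B_R(0)} |x|^{-2α} e^{U_{λ₂,α}(x)} dx ≤ m(R) ≤ ∫_{ℝ²∖B_R(0)} |x|^{-2α} e^{U_{λ₁,α}(x)} dx. -/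

import Mathlib

open Real MeasureTheory Metric Filter Topology RealInnerProductSpace

noncomputable section

/-- The plane `ℝ²`. -/
abbrev Pl := EuclideanSpace ℝ (Fin 2)

/-- The Laplacian `Δu = ∂²u/∂x₁² + ∂²u/∂x₂²` of a function on `ℝ²`. -/
def lap (u : Pl → ℝ) (x : Pl) : ℝ :=
  ∑ i : Fin 2, fderiv ℝ (fun y => fderiv ℝ u y (EuclideanSpace.single i 1)) x
    (EuclideanSpace.single i 1)

/-- The radial profile of `U_{λ,α}`. -/
def Uval (lam a r : ℝ) : ℝ :=
  Real.log ((lam * (1 - a)) ^ 2 / (1 + lam ^ 2 / 8 * r ^ (2 * (1 - a))) ^ 2)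

/-- `U_{λ,α}(x) = ln( (λ(1−α))² / (1 + (λ²/8)|x|^{2(1−α)})² )`. -/
def U (lam a : ℝ) (x : Pl) : ℝ := Uval lam a ‖x‖

/-- `g` satisfies the exterior radial Bol hypothesis with parameter `a` on `[R,∞)`:
it is continuous and strictly decreasing on `[R,∞)`, differentiable on `(R,∞)`, the
exterior mass `m(r) = 2π∫_r^∞ s^{1−2a} e^{g(s)} ds` is finite for every `r ≥ R`, and
`2πr·(−g'(r)) ≤ 8π(1−a) − m(r)` for every `r ∈ (R,∞)`. -/
def ExteriorBol (a R : ℝ) (g : ℝ → ℝ) : Prop :=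
  ContinuousOn g (Set.Ici R) ∧ StrictAntiOn g (Set.Ici R) ∧
  (∀ r ∈ Set.Ioi R, DifferentiableAt ℝ g r) ∧
  (∀ r ∈ Set.Ici R, IntegrableOn (fun s => s ^ (1 - 2*a) * Real.exp (g s)) (Set.Ioi r)) ∧
  (∀ r ∈ Set.Ioi R,
    2 * π * r * (-(deriv g r)) ≤
      8 * π * (1 - a) - 2 * π * ∫ s in Set.Ioi r, s ^ (1 - 2*a) * Real.exp (g s))

open Set

/-!
For `r ≥ R` let `m(r)` be the exterior mass and put
`Φ(r) = m(r) (8π(1-α) - m(r)) - 8π² r^{2(1-α)} e^{g(r)}`. Its derivative is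
`4π r^{1-2α} e^{g(r)} (2πr(-g'(r)) - (8π(1-α) - m(r)))`, which the Bol hypothesis makes `≤ 0`.
If `Φ(R) < 0`, then `Φ(r) ≤ Φ(R)` and `0 ≤ m(r) < 8π(1-α)` force
`r^{1-2α} e^{g(r)} ≥ c / r` for some `c > 0`, contradicting `m(R) < ∞`. Hence `Φ(R) ≥ 0`, i.e.
`m(R)` lies between the roots of `x (8π(1-α) - x) = 8π² R^{2(1-α)} e^{g(R)}`.

The profiles `U_{λ,α}` are equality cases: `Φ ≡ 0` for them, and their exterior masses are
`8π(1-α) / (1 + λ² R^{2(1-α)} / 8)`. Since `U_{λ₁,α}` and `U_{λ₂,α}` both take the value `g(R)` at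
radius `R`, their two distinct masses are exactly those two roots.
-/

theorem hasDerivAt_integral_Ioi {E : Type*} [NormedAddCommGroup E] [NormedSpace ℝ E]
    [CompleteSpace E] {f : ℝ → E} {a r : ℝ} (hf : IntegrableOn f (Ioi a)) (har : a < r)
    (hfr : ContinuousAt f r) :
    HasDerivAt (fun b => ∫ x in Ioi b, f x) (-f r) r := by
  have hsplit : (fun b => ∫ x in Ioi b, f x) =ᶠ[𝓝 r]
      fun b => (∫ x in Ioi a, f x) - ∫ x in a..b, f x := by
    filter_upwards [Ioi_mem_nhds har] with b hb
    rw [← intervalIntegral.integral_Ioi_sub_Ioi hf hb.le, sub_sub_cancel]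
  have hprim : HasDerivAt (fun b => ∫ x in a..b, f x) (f r) r :=
    intervalIntegral.integral_hasDerivAt_right
      ((intervalIntegrable_iff_integrableOn_Ioc_of_le har.le).2 (hf.mono_set Ioc_subset_Ioi_self))
      (AEStronglyMeasurable.stronglyMeasurableAtFilter_of_mem hf.aestronglyMeasurable
        (Ioi_mem_nhds har)) hfr
  simpa using (hprim.const_sub _).congr_of_eventuallyEq hsplit

theorem not_integrableOn_Ioi_of_le_mul {f : ℝ → ℝ} {R d : ℝ} (hR : 0 < R) (hd : 0 < d)
    (h : ∀ r ∈ Ioi R, d ≤ r * f r) : ¬ IntegrableOn f (Ioi R) := fun hf =>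
  not_integrableOn_Ioi_inv <| (hf.const_mul d⁻¹).mono' measurable_inv.aestronglyMeasurable <| by
    filter_upwards [self_mem_ae_restrict measurableSet_Ioi] with r hr
    have hr0 : 0 < r := hR.trans hr
    rw [norm_inv, norm_of_nonneg hr0.le, inv_mul_eq_div, le_div_iff₀ hd, inv_mul_le_iff₀ hr0]
    exact h r hr

theorem mem_Icc_of_roots_le_mul_sub {B c x y m : ℝ} (hx : x * (B - x) = c)
    (hy : y * (B - y) = c) (hyx : y < x) (hm : c ≤ m * (B - m)) : m ∈ Icc y x := by
  have hsum : x + y = B := by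
    have : (x - y) * (B - x - y) = 0 := by linear_combination hx - hy
    rcases mul_eq_zero.1 this with h | h <;> linarith
  have hprod : (m - y) * (x - m) = m * (B - m) - c := by rw [← hx, ← hsum]; ring
  constructor <;> nlinarith

theorem integral_compl_ball_fun_norm (f : ℝ → ℝ) {R : ℝ} (hR : 0 < R) :
    ∫ x in (ball (0 : Pl) R)ᶜ, f ‖x‖ = 2 * π * ∫ r in Ioi R, r * f r := by
  have hcompl : ∫ x in (ball (0 : Pl) R)ᶜ, f ‖x‖ = ∫ x : Pl, (Ici R).indicator f ‖x‖ := by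
    rw [← integral_indicator measurableSet_ball.compl]
    congr 1 with x
    by_cases hx : R ≤ ‖x‖
    · rw [indicator_of_mem (by simpa using hx), indicator_of_mem (mem_Ici.mpr hx)]
    · rw [indicator_of_notMem (by simpa using hx),
        indicator_of_notMem (notMem_Ici.mpr (not_le.mp hx))]
  have hradial : ∫ y in Ioi (0 : ℝ), y ^ (2 - 1) • (Ici R).indicator f y
      = ∫ r in Ioi R, r * f r := by
    have hind : (fun y : ℝ => y ^ (2 - 1) • (Ici R).indicator f y)
        = (Ici R).indicator (fun r => r * f r) := by
      ext y
      simp [indicator_apply]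
    rw [hind, integral_indicator measurableSet_Ici, Measure.restrict_restrict measurableSet_Ici,
      inter_eq_left.mpr (Ici_subset_Ioi.mpr hR), integral_Ici_eq_integral_Ioi]
  rw [hcompl, integral_fun_norm_addHaar, finrank_euclideanSpace_fin, measureReal_def,
    EuclideanSpace.volume_ball_fin_two, hradial]
  simp [ENNReal.toReal_ofReal pi_nonneg]
  ring

theorem rpow_two_mul_one_sub {r : ℝ} (a : ℝ) (hr : 0 < r) :
    r ^ (2 * (1 - a)) = r * r ^ (1 - 2 * a) := by
  rw [show 2 * (1 - a) = 1 + (1 - 2 * a) by ring, rpow_add hr, rpow_one]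

section BolDefect

variable (a : ℝ) (g : ℝ → ℝ)

def exteriorMass (r : ℝ) : ℝ := 2 * π * ∫ s in Ioi r, s ^ (1 - 2 * a) * exp (g s)

def bolDefect (r : ℝ) : ℝ :=
  exteriorMass a g r * (8 * π * (1 - a) - exteriorMass a g r)
    - 8 * π ^ 2 * r ^ (2 * (1 - a)) * exp (g r)

variable {a g} {R r : ℝ}

theorem exteriorMass_nonneg (hr : 0 ≤ r) : 0 ≤ exteriorMass a g r :=
  mul_nonneg (by positivity) <| setIntegral_nonneg measurableSet_Ioi fun s hs =>
    mul_nonneg (rpow_nonneg (hr.trans (le_of_lt hs)) _) (exp_pos _).le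

theorem antitoneOn_exteriorMass (hR : 0 ≤ R)
    (hint : IntegrableOn (fun s => s ^ (1 - 2 * a) * exp (g s)) (Ioi R)) :
    AntitoneOn (exteriorMass a g) (Ici R) := fun r hr s _ hrs => by
  refine mul_le_mul_of_nonneg_left (setIntegral_mono_set (hint.mono_set (Ioi_subset_Ioi hr))
    ?_ (Ioi_subset_Ioi hrs).eventuallyLE) (by positivity)
  filter_upwards [self_mem_ae_restrict measurableSet_Ioi] with t ht
  exact mul_nonneg (rpow_nonneg (hR.trans (hr.trans (le_of_lt ht))) _) (exp_pos _).le

theorem hasDerivAt_exteriorMass (hR : 0 ≤ R) (hr : R < r)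
    (hint : IntegrableOn (fun s => s ^ (1 - 2 * a) * exp (g s)) (Ioi R)) (hg : ContinuousAt g r) :
    HasDerivAt (exteriorMass a g) (-(2 * π * (r ^ (1 - 2 * a) * exp (g r)))) r := by
  have hcont : ContinuousAt (fun s => s ^ (1 - 2 * a) * exp (g s)) r :=
    (continuousAt_rpow_const _ _ (Or.inl (hR.trans_lt hr).ne')).mul
      (continuous_exp.continuousAt.comp hg)
  unfold exteriorMass
  simpa using (hasDerivAt_integral_Ioi hint hr hcont).const_mul (2 * π)

theorem continuousOn_bolDefect (hR : 0 < R) (hg : ContinuousOn g (Ici R))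
    (hint : IntegrableOn (fun s => s ^ (1 - 2 * a) * exp (g s)) (Ioi R)) :
    ContinuousOn (bolDefect a g) (Ici R) := by
  have hmass : ContinuousOn (exteriorMass a g) (Ici R) :=
    continuousOn_const.mul hint.continuousOn_Ici_primitive_Ioi
  have hpow : ContinuousOn (fun r : ℝ => r ^ (2 * (1 - a))) (Ici R) := fun r hr =>
    (continuousAt_rpow_const _ _ (Or.inl (hR.trans_le hr).ne')).continuousWithinAt
  exact (hmass.mul (continuousOn_const.sub hmass)).sub
    ((continuousOn_const.mul hpow).mul (continuous_exp.comp_continuousOn hg))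

theorem hasDerivAt_bolDefect {g' : ℝ} (hr : 0 < r)
    (hmass : HasDerivAt (exteriorMass a g) (-(2 * π * (r ^ (1 - 2 * a) * exp (g r)))) r)
    (hg : HasDerivAt g g' r) :
    HasDerivAt (bolDefect a g) (4 * π * (r ^ (1 - 2 * a) * exp (g r)) *
      (2 * π * r * -g' - (8 * π * (1 - a) - exteriorMass a g r))) r := by
  have hpow : HasDerivAt (fun r : ℝ => r ^ (2 * (1 - a))) (2 * (1 - a) * r ^ (1 - 2 * a)) r := by
    simpa [show 2 * (1 - a) - 1 = 1 - 2 * a by ring] using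
      hasDerivAt_rpow_const (p := 2 * (1 - a)) (Or.inl hr.ne')
  refine ((hmass.mul (hmass.const_sub _)).sub
    (((hpow.const_mul (8 * π ^ 2)).mul hg.exp))).congr_deriv ?_
  rw [rpow_two_mul_one_sub a hr]
  ring

theorem ExteriorBol.antitoneOn_bolDefect (hg : ExteriorBol a R g) (hR : 0 < R) :
    AntitoneOn (bolDefect a g) (Ici R) := by
  obtain ⟨hgc, -, hgd, hint, hbol⟩ := hg
  have hderiv : ∀ r ∈ Ioi R, HasDerivAt (bolDefect a g) (4 * π * (r ^ (1 - 2 * a) * exp (g r)) *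
      (2 * π * r * -deriv g r - (8 * π * (1 - a) - exteriorMass a g r))) r := fun r hr =>
    hasDerivAt_bolDefect (hR.trans hr)
      (hasDerivAt_exteriorMass hR.le hr (hint R self_mem_Ici) (hgd r hr).continuousAt)
      (hgd r hr).hasDerivAt
  refine antitoneOn_of_deriv_nonpos (convex_Ici R)
    (continuousOn_bolDefect hR hgc (hint R self_mem_Ici)) (fun r hr => ?_) (fun r hr => ?_) <;>
    rw [interior_Ici] at hr
  · exact (hderiv r hr).differentiableAt.differentiableWithinAt
  · have : 0 < r := hR.trans hr
    rw [(hderiv r hr).deriv]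
    exact mul_nonpos_of_nonneg_of_nonpos (by positivity) (sub_nonpos.2 (hbol r hr))

theorem ExteriorBol.bolDefect_nonneg (hg : ExteriorBol a R g) (hR : 0 < R)
    (hmR : exteriorMass a g R < 8 * π * (1 - a)) : 0 ≤ bolDefect a g R := by
  by_contra! hneg
  have hint := hg.2.2.2.1 R self_mem_Ici
  refine not_integrableOn_Ioi_of_le_mul hR (neg_pos.2 hneg) (fun r hr => ?_)
    (hint.const_mul (8 * π ^ 2))
  have hr0 : 0 < r := hR.trans hr
  have hdefect := hg.antitoneOn_bolDefect hR self_mem_Ici (mem_Ici.2 hr.le) hr.le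
  have hmass := antitoneOn_exteriorMass hR.le hint self_mem_Ici (mem_Ici.2 hr.le) hr.le
  have hquad : 0 ≤ exteriorMass a g r * (8 * π * (1 - a) - exteriorMass a g r) :=
    mul_nonneg (exteriorMass_nonneg hr0.le) (by linarith)
  rw [bolDefect, rpow_two_mul_one_sub a hr0] at hdefect
  linarith

end BolDefect

theorem exp_Uval {lam a r : ℝ} (hlam : lam ≠ 0) (ha : a ≠ 1) (hr : 0 ≤ r) :
    exp (Uval lam a r) = (lam * (1 - a)) ^ 2 / (1 + lam ^ 2 / 8 * r ^ (2 * (1 - a))) ^ 2 := by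
  have : lam * (1 - a) ≠ 0 := mul_ne_zero hlam (sub_ne_zero.mpr (Ne.symm ha))
  exact exp_log (by positivity)

theorem hasDerivAt_Uval_primitive {lam a r : ℝ} (hlam : lam ≠ 0) (ha : a ≠ 1) (hr : 0 < r) :
    HasDerivAt (fun r : ℝ => -(4 * (1 - a)) / (1 + lam ^ 2 / 8 * r ^ (2 * (1 - a))))
      (r ^ (1 - 2 * a) * exp (Uval lam a r)) r := by
  have hden : HasDerivAt (fun r : ℝ => 1 + lam ^ 2 / 8 * r ^ (2 * (1 - a)))
      (lam ^ 2 / 8 * (2 * (1 - a) * r ^ (2 * (1 - a) - 1))) r :=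
    ((hasDerivAt_rpow_const (Or.inl hr.ne')).const_mul _).const_add 1
  refine ((hden.inv (by positivity)).const_mul (-(4 * (1 - a)))).congr_deriv ?_
  rw [exp_Uval hlam ha hr.le, show 2 * (1 - a) - 1 = 1 - 2 * a by ring]
  field_simp
  ring

theorem integral_Ioi_rpow_mul_exp_Uval {lam a R : ℝ} (hlam : lam ≠ 0) (ha : a < 1)
    (hR : 0 < R) :
    ∫ r in Ioi R, r ^ (1 - 2 * a) * exp (Uval lam a r)
      = 4 * (1 - a) / (1 + lam ^ 2 / 8 * R ^ (2 * (1 - a))) := by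
  have hderiv : ∀ r ∈ Ici R, HasDerivAt
      (fun r : ℝ => -(4 * (1 - a)) / (1 + lam ^ 2 / 8 * r ^ (2 * (1 - a))))
      (r ^ (1 - 2 * a) * exp (Uval lam a r)) r :=
    fun r hr => hasDerivAt_Uval_primitive hlam ha.ne (hR.trans_le hr)
  have hlim : Tendsto (fun r : ℝ => -(4 * (1 - a)) / (1 + lam ^ 2 / 8 * r ^ (2 * (1 - a))))
      atTop (𝓝 0) := by
    have hden : Tendsto (fun r : ℝ => 1 + lam ^ 2 / 8 * r ^ (2 * (1 - a))) atTop atTop :=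
      tendsto_atTop_add_const_left _ _
        ((tendsto_rpow_atTop (by linarith)).const_mul_atTop (by positivity))
    simpa only [div_eq_mul_inv, mul_zero, Pi.inv_apply] using
      hden.inv_tendsto_atTop.const_mul (-(4 * (1 - a)))
  rw [integral_Ioi_of_hasDerivAt_of_nonneg (hderiv R self_mem_Ici).continuousAt.continuousWithinAt
    (fun r hr => hderiv r (mem_Ici_of_Ioi hr))
    (fun r hr => by have := hR.trans hr; positivity) hlim]
  ring

theorem setIntegral_compl_ball_rpow_mul_exp_U (lam a : ℝ) {R : ℝ} (hR : 0 < R) :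
    ∫ x in (ball (0 : Pl) R)ᶜ, ‖x‖ ^ (-(2 * a)) * exp (U lam a x)
      = exteriorMass a (Uval lam a) R := by
  refine (integral_compl_ball_fun_norm (fun r => r ^ (-(2 * a)) * exp (Uval lam a r)) hR).trans
    (congrArg (2 * π * ·) (setIntegral_congr_fun measurableSet_Ioi fun r hr => ?_))
  rw [← mul_assoc, sub_eq_add_neg, rpow_add (hR.trans hr), rpow_one]

theorem exteriorMass_Uval {lam a R : ℝ} (hlam : lam ≠ 0) (ha : a < 1) (hR : 0 < R) :
    exteriorMass a (Uval lam a) R = 8 * π * (1 - a) / (1 + lam ^ 2 / 8 * R ^ (2 * (1 - a))) := by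
  rw [exteriorMass, integral_Ioi_rpow_mul_exp_Uval hlam ha hR]
  ring

theorem bolDefect_Uval {lam a R : ℝ} (hlam : lam ≠ 0) (ha : a < 1) (hR : 0 < R) :
    bolDefect a (Uval lam a) R = 0 := by
  rw [bolDefect, exteriorMass_Uval hlam ha hR, exp_Uval hlam ha.ne hR.le]
  field_simp
  ring

theorem exteriorMass_Uval_lt {lam1 lam2 a R : ℝ} (h1 : 0 < lam1) (h12 : lam1 < lam2) (ha : a < 1)
    (hR : 0 < R) : exteriorMass a (Uval lam2 a) R < exteriorMass a (Uval lam1 a) R := by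
  rw [exteriorMass_Uval h1.ne' ha hR, exteriorMass_Uval (h1.trans h12).ne' ha hR]
  have : 0 < 1 - a := sub_pos.2 ha
  have : 0 < R ^ (2 * (1 - a)) := rpow_pos_of_pos hR _
  gcongr

/-- Exterior mass sandwich (Lemma 2.6). -/
theorem exterior_mass_sandwich (a R lam1 lam2 : ℝ) (ha : a ∈ Set.Ico (0:ℝ) 1) (hR : 0 < R)
    (h1 : 0 < lam1) (h12 : lam1 < lam2)
    (hval : Uval lam1 a R = Uval lam2 a R)
    (g : ℝ → ℝ) (hg : ExteriorBol a R g)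
    (hmR : 2 * π * ∫ s in Set.Ioi R, s ^ (1 - 2*a) * Real.exp (g s) < 8 * π * (1 - a))
    (hgR : g R = Uval lam1 a R) :
    (∫ x in (ball (0 : Pl) R)ᶜ, ‖x‖ ^ (-(2*a)) * Real.exp (U lam2 a x))
        ≤ 2 * π * ∫ s in Set.Ioi R, s ^ (1 - 2*a) * Real.exp (g s) ∧
    (2 * π * ∫ s in Set.Ioi R, s ^ (1 - 2*a) * Real.exp (g s))
        ≤ ∫ x in (ball (0 : Pl) R)ᶜ, ‖x‖ ^ (-(2*a)) * Real.exp (U lam1 a x) := by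
  have hroot : ∀ lam, 0 < lam → g R = Uval lam a R →
      exteriorMass a (Uval lam a) R * (8 * π * (1 - a) - exteriorMass a (Uval lam a) R)
        = 8 * π ^ 2 * R ^ (2 * (1 - a)) * exp (g R) := fun lam hlam hgR => by
    rw [hgR]
    exact sub_eq_zero.1 (bolDefect_Uval hlam.ne' ha.2 hR)
  have hmass := mem_Icc_of_roots_le_mul_sub (hroot lam1 h1 hgR)
    (hroot lam2 (h1.trans h12) (hgR.trans hval)) (exteriorMass_Uval_lt h1 h12 ha.2 hR)
    (sub_nonneg.1 (hg.bolDefect_nonneg hR hmR))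
  rw [setIntegral_compl_ball_rpow_mul_exp_U lam1 a hR,
    setIntegral_compl_ball_rpow_mul_exp_U lam2 a hR]
  exact hmass
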